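/- Let G be a graph with no isolated vertex, maximum degree Δ and order n. For any w-dominating function f with associated level sets V_0,...,V_l, where w=(w_0,...,w_l) satisfies w_0 ≥ ... ≥ w_l, we have Δ·ω(f) ≥ w_0·n + Σ_{i=1}^{l} (w_i − w_0)|V_i|. -/

import Mathlib

open scoped Classical
open Finset SimpleGraph

/-- A `w`-dominating function: `f : V → {0,…,l}` with `f(N(v)) ≥ w_{f(v)}` for all `v`. -/
def WDom {V : Type*} [Fintype V] (G : SimpleGraph V) {l : ℕ} (w : Fin (l+1) → ℕ)
    (f : V → Fin (l+1)) : Prop :=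
  ∀ v, w (f v) ≤ ∑ u, if G.Adj v u then (f u : ℕ) else 0

/-- The `w`-domination number. -/
noncomputable def gammaW {V : Type*} [Fintype V] (G : SimpleGraph V) {l : ℕ}
    (w : Fin (l+1) → ℕ) : ℕ :=
  sInf {n | ∃ f : V → Fin (l+1), WDom G w f ∧ ∑ v, (f v : ℕ) = n}

/-- The Italian domination number `γ_I = γ_{(2,0,0)}`. -/
noncomputable def gammaI {V : Type*} [Fintype V] (G : SimpleGraph V) : ℕ :=
  gammaW G ![2,0,0]

/-- The domination number. -/
noncomputable def gamma {V : Type*} [Fintype V] (G : SimpleGraph V) : ℕ :=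
  sInf {n | ∃ S : Finset V, (∀ v, v ∈ S ∨ ∃ u ∈ S, G.Adj u v) ∧ S.card = n}

/-- The total domination number. -/
noncomputable def gammaT {V : Type*} [Fintype V] (G : SimpleGraph V) : ℕ :=
  sInf {n | ∃ S : Finset V, (∀ v, ∃ u ∈ S, G.Adj u v) ∧ S.card = n}

/-- The 2-domination number. -/
noncomputable def gamma2 {V : Type*} [Fintype V] (G : SimpleGraph V) : ℕ :=
  sInf {n | ∃ S : Finset V, (∀ v ∉ S, 2 ≤ (S.filter (fun u => G.Adj u v)).card) ∧ S.card = n}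

/-- The double domination number. -/
noncomputable def gammaX2 {V : Type*} [Fintype V] (G : SimpleGraph V) : ℕ :=
  sInf {n | ∃ S : Finset V, (∀ v, 2 ≤ (S.filter (fun u => u = v ∨ G.Adj u v)).card) ∧ S.card = n}

/-- The double total domination number. -/
noncomputable def gammaX2T {V : Type*} [Fintype V] (G : SimpleGraph V) : ℕ :=
  sInf {n | ∃ S : Finset V, (∀ v, 2 ≤ (S.filter (fun u => G.Adj u v)).card) ∧ S.card = n}

/-- The lexicographic product `G ∘ H`. -/
def lexProd {V W : Type*} (G : SimpleGraph V) (H : SimpleGraph W) : SimpleGraph (V × W) where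
  Adj x y := G.Adj x.1 y.1 ∨ (x.1 = y.1 ∧ H.Adj x.2 y.2)
  symm := by
    refine ⟨?_⟩
    rintro x y (h | ⟨h1, h2⟩)
    · exact Or.inl h.symm
    · exact Or.inr ⟨h1.symm, h2.symm⟩
  loopless := by
    refine ⟨?_⟩
    rintro x (h | ⟨_, h⟩)
    · exact h.ne rfl
    · exact h.ne rfl

/-! The left-hand side is `∑_v w_{f(v)}` regrouped by the level sets `V_i`. Summing the
domination condition over all `v` and double counting the edges gives
`∑_v w_{f(v)} ≤ ∑_v f(N(v)) = ∑_u deg(u) f(u) ≤ Δ ω(f)`. -/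

theorem SimpleGraph.sum_sum_ite_adj_eq_sum_degree_nsmul {V M : Type*} [Fintype V]
    [AddCommMonoid M] (G : SimpleGraph V) [DecidableRel G.Adj] (g : V → M) :
    ∑ v, ∑ u, (if G.Adj v u then g u else 0) = ∑ u, G.degree u • g u := by
  rw [sum_comm]
  refine sum_congr rfl fun u _ => ?_
  rw [← sum_filter, sum_const, ← card_neighborFinset_eq_degree, neighborFinset_eq_filter]
  simp only [adj_comm]

theorem WDom.sum_weight_le_maxDegree_mul {V : Type*} [Fintype V] {G : SimpleGraph V} {l : ℕ}
    {w : Fin (l+1) → ℕ} {f : V → Fin (l+1)} (hf : WDom G w f) :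
    ∑ v, w (f v) ≤ G.maxDegree * ∑ v, (f v : ℕ) :=
  calc ∑ v, w (f v)
      ≤ ∑ v, ∑ u, if G.Adj v u then (f u : ℕ) else 0 := sum_le_sum fun v _ => hf v
    _ = ∑ u, G.degree u * f u := G.sum_sum_ite_adj_eq_sum_degree_nsmul _
    _ ≤ ∑ u, G.maxDegree * f u := by gcongr; exact G.degree_le_maxDegree _
    _ = G.maxDegree * ∑ v, (f v : ℕ) := (mul_sum ..).symm

theorem Finset.mul_card_add_sum_sub_mul_card_fiber {V ι R : Type*} [Fintype V] [Fintype ι]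
    [DecidableEq ι] [CommRing R] (f : V → ι) (c : ι → R) (i₀ : ι) :
    c i₀ * Fintype.card V + ∑ i ∈ univ.filter (· ≠ i₀), (c i - c i₀) * (#{v | f v = i} : R) =
      ∑ v, c (f v) := by
  have hcard : (Fintype.card V : R) = ∑ i, (#{v | f v = i} : R) := by
    rw [← Nat.cast_sum, ← card_eq_sum_card_fiberwise fun v _ => mem_univ (f v), card_univ]
  have hfiber : ∑ v, c (f v) = ∑ i, c i * #{v | f v = i} := by
    rw [← sum_fiberwise' univ f c]
    simp only [sum_const, nsmul_eq_mul, mul_comm]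
  rw [sum_filter_of_ne fun i _ hi => by rintro rfl; simp at hi, hcard, mul_sum,
    ← sum_add_distrib, hfiber]
  exact sum_congr rfl fun i _ => by ring

theorem maxDegree_mul_weight_lower_bound_general {V : Type*} [Fintype V] (G : SimpleGraph V)
    {l : ℕ} (w : Fin (l+1) → ℕ)
    (f : V → Fin (l+1)) (hf : WDom G w f) :
    (w 0 : ℤ) * Fintype.card V +
      ∑ i ∈ Finset.univ.filter (fun i : Fin (l+1) => i ≠ 0),
        ((w i : ℤ) - (w 0 : ℤ)) * ((Finset.univ.filter (fun v => f v = i)).card : ℤ)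
      ≤ (G.maxDegree : ℤ) * ((∑ v, (f v : ℕ) : ℕ) : ℤ) := by
  rw [mul_card_add_sum_sub_mul_card_fiber f (fun i => (w i : ℤ)) 0]
  exact_mod_cast hf.sum_weight_le_maxDegree_mul

theorem maxDegree_mul_weight_lower_bound {V : Type*} [Fintype V] (G : SimpleGraph V)
    (hG : ∀ v, ∃ u, G.Adj v u) {l : ℕ} (w : Fin (l+1) → ℕ)
    (hw : Antitone w) (h0 : 1 ≤ w 0) (f : V → Fin (l+1)) (hf : WDom G w f) :
    (w 0 : ℤ) * Fintype.card V +
      ∑ i ∈ Finset.univ.filter (fun i : Fin (l+1) => i ≠ 0),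
        ((w i : ℤ) - (w 0 : ℤ)) * ((Finset.univ.filter (fun v => f v = i)).card : ℤ)
      ≤ (G.maxDegree : ℤ) * ((∑ v, (f v : ℕ) : ℕ) : ℤ) :=
  maxDegree_mul_weight_lower_bound_general G w f hf
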